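/- arXiv:2109.13335 — 4 statements merged into one kernel-verified Lean document; each statement's English description precedes it below -/
import Mathlib

section
/- The broken 2×2 matrix product has bilinear rank at most 6: there exist integer coefficient arrays u, v : Fin 6 → (Fin 2 × Fin 2) → ℤ and w : (Fin 2 × Fin 2) → Fin 6 → ℤ such that for every commutative ring R and all 2×2 matrices A, B over R, defining P_k = (Σ_{p,q} u k (p,q) • A_{pq}) * (Σ_{p,q} v k (p,q) • B_{pq}) for k ∈ Fin 6, the matrix C given by C_{ij} = Σ_{k} w (i,j) k • P_k satisfies C_{11} = A_{12} B_{21}, C_{12} = A_{11} B_{12} + A_{12} B_{22}, C_{21} = A_{21} B_{11} + A_{22} B_{21}, and C_{22} = A_{21} B_{12} + A_{22} B_{22}. -/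
/-!
Write `P = products A B`. `C 0 0` is the single product `P 2 = A 0 1 * B 1 0`; the other three
entries agree with the full product and are obtained from `C 1 1 = P 0 + P 1 + P 2 + P 5` by
subtracting `C 1 1 - C 0 1 = (row 1 - row 0 of A) ⬝ (column 1 of B) = P 5 - P 4` and
`C 1 1 - C 1 0 = (row 1 of A) ⬝ (column 1 - column 0 of B) = P 1 + P 3`.
-/

namespace BrokenTwoByTwo

def leftCoeffs : Fin 6 → Fin 2 × Fin 2 → ℤ := fun k pq =>
  ![!![0, 1; 1, -1], !![0, 0; 1, -1], !![0, 1; 0, 0],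
    !![0, 0; 1, 0], !![1, -1; -1, 1], !![0, -1; 0, 1]] k pq.1 pq.2

def rightCoeffs : Fin 6 → Fin 2 × Fin 2 → ℤ := fun k pq =>
  ![!![0, 1; -1, 1], !![0, 0; 1, -1], !![0, 0; 1, 0],
    !![-1, 1; -1, 1], !![0, 1; 0, 0], !![0, 1; 0, 1]] k pq.1 pq.2

def outputCoeffs : Fin 2 × Fin 2 → Fin 6 → ℤ := fun ij =>
  !![![0, 0, 1, 0, 0, 0], ![1, 1, 1, 0, 1, 0];
    ![1, 0, 1, -1, 0, 1], ![1, 1, 1, 0, 0, 1]] ij.1 ij.2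

section

variable {R : Type*} [Ring R] (A B : Matrix (Fin 2) (Fin 2) R)

def products : Fin 6 → R :=
  ![(A 0 1 + A 1 0 - A 1 1) * (B 0 1 - B 1 0 + B 1 1),
    (A 1 0 - A 1 1) * (B 1 0 - B 1 1),
    A 0 1 * B 1 0,
    A 1 0 * (B 0 1 + B 1 1 - B 0 0 - B 1 0),
    (A 0 0 - A 0 1 - A 1 0 + A 1 1) * B 0 1,
    (A 1 1 - A 0 1) * (B 0 1 + B 1 1)]

theorem sum_smul_mul_sum_smul_eq_products (k : Fin 6) :
    (∑ p : Fin 2, ∑ q : Fin 2, leftCoeffs k (p, q) • A p q) *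
      (∑ p : Fin 2, ∑ q : Fin 2, rightCoeffs k (p, q) • B p q) = products A B k := by
  fin_cases k <;> simp [leftCoeffs, rightCoeffs, products, Fin.sum_univ_two] <;> noncomm_ring

theorem products_two : products A B 2 = A 0 1 * B 1 0 := rfl

theorem products_zero_add_one_add_two_add_five :
    products A B 0 + products A B 1 + products A B 2 + products A B 5 =
      A 1 0 * B 0 1 + A 1 1 * B 1 1 := by
  simp [products]; noncomm_ring

theorem products_five_sub_four :
    products A B 5 - products A B 4 = (A 1 0 - A 0 0) * B 0 1 + (A 1 1 - A 0 1) * B 1 1 := by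
  simp [products]; noncomm_ring

theorem products_one_add_three :
    products A B 1 + products A B 3 = A 1 0 * (B 0 1 - B 0 0) + A 1 1 * (B 1 1 - B 1 0) := by
  simp [products]; noncomm_ring

end

end BrokenTwoByTwo

open BrokenTwoByTwo in
/-- The broken 2×2 matrix product (omitting the summand `A 0 0 * B 0 0` from `C 0 0`)
has bilinear rank at most 6. -/
theorem broken_two_by_two_rank_le_six :
    ∃ (u v : Fin 6 → (Fin 2 × Fin 2) → ℤ) (w : (Fin 2 × Fin 2) → Fin 6 → ℤ),
      ∀ (R : Type) [CommRing R] (A B : Matrix (Fin 2) (Fin 2) R),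
        let P : Fin 6 → R := fun k =>
          (∑ p : Fin 2, ∑ q : Fin 2, u k (p, q) • A p q) *
          (∑ p : Fin 2, ∑ q : Fin 2, v k (p, q) • B p q)
        let C : Matrix (Fin 2) (Fin 2) R := fun i j => ∑ k : Fin 6, w (i, j) k • P k
        C 0 0 = A 0 1 * B 1 0 ∧
        C 0 1 = A 0 0 * B 0 1 + A 0 1 * B 1 1 ∧
        C 1 0 = A 1 0 * B 0 0 + A 1 1 * B 1 0 ∧
        C 1 1 = A 1 0 * B 0 1 + A 1 1 * B 1 1 := by
  refine ⟨leftCoeffs, rightCoeffs, outputCoeffs, fun R _ A B => ?_⟩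
  simp only [sum_smul_mul_sum_smul_eq_products, outputCoeffs, Fin.sum_univ_six, Matrix.of_apply,
    Matrix.cons_val_zero, Matrix.cons_val_one, Matrix.cons_val]
  have h11 := products_zero_add_one_add_two_add_five A B
  refine ⟨?_, ?_, ?_, ?_⟩
  · linear_combination products_two A B
  · linear_combination h11 - products_five_sub_four A B
  · linear_combination h11 - products_one_add_three A B
  · linear_combination h11
end

section
/- For every s ∈ ℕ, every commutative ring R, and all matrices A, B indexed by {0,1}^s × {0,1}^s with entries in R, the iterated pseudo-product C = A ⊗ B satisfies the closed form C_{xy} = Σ_{z ∈ {0,1}^s, x ∨ y ∨ z = 1^s} A_{xz} B_{zy} for all x, y ∈ {0,1}^s. -/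
/-- The iterated pseudo-product of matrices indexed by `{0,1}^s`, defined recursively
via the 2×2 block decomposition according to the first coordinate:
`C̄₀₀ = Ā₀₁ ⊗ B̄₁₀`, `C̄₀₁ = Ā₀₀ ⊗ B̄₀₁ + Ā₀₁ ⊗ B̄₁₁`,
`C̄₁₀ = Ā₁₀ ⊗ B̄₀₀ + Ā₁₁ ⊗ B̄₁₀`, `C̄₁₁ = Ā₁₀ ⊗ B̄₀₁ + Ā₁₁ ⊗ B̄₁₁`. -/
def pseudoMul {R : Type*} [CommRing R] :
    (s : ℕ) → ((Fin s → Bool) → (Fin s → Bool) → R) →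
      ((Fin s → Bool) → (Fin s → Bool) → R) →
      ((Fin s → Bool) → (Fin s → Bool) → R)
  | 0, A, B => fun x y => A x y * B x y
  | (s + 1), A, B => fun x y =>
    let Ab : Bool → Bool → (Fin s → Bool) → (Fin s → Bool) → R :=
      fun a b u v => A (Fin.cons a u) (Fin.cons b v)
    let Bb : Bool → Bool → (Fin s → Bool) → (Fin s → Bool) → R :=
      fun a b u v => B (Fin.cons a u) (Fin.cons b v)
    let x' : Fin s → Bool := fun i => x i.succ
    let y' : Fin s → Bool := fun i => y i.succ
    match x 0, y 0 with
    | false, false => pseudoMul s (Ab false true) (Bb true false) x' y'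
    | false, true => pseudoMul s (Ab false false) (Bb false true) x' y' +
        pseudoMul s (Ab false true) (Bb true true) x' y'
    | true, false => pseudoMul s (Ab true false) (Bb false false) x' y' +
        pseudoMul s (Ab true true) (Bb true false) x' y'
    | true, true => pseudoMul s (Ab true false) (Bb false true) x' y' +
        pseudoMul s (Ab true true) (Bb true true) x' y'

/-! Induct on `s`, splitting the summation variable `z` into its first bit `c` and its tail.
The first coordinate admits only `c = 1` when `x₀ = y₀ = 0` and both values of `c` otherwise,
which reproduces the four block formulas of the recursion. -/

open Finset

theorem Fin.sum_filter_forall_succ {M α : Type*} [AddCommMonoid M] [Fintype α] {n : ℕ}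
    (p : Fin (n + 1) → α → Prop) [∀ i, DecidablePred (p i)] (f : (Fin (n + 1) → α) → M) :
    ∑ z ∈ univ.filter (fun z => ∀ i, p i (z i)), f z =
      ∑ a ∈ univ.filter (p 0),
        ∑ z ∈ univ.filter (fun z : Fin n → α => ∀ i, p i.succ (z i)), f (Fin.cons a z) := by
  rw [sum_filter, ← (Fin.consEquiv fun _ => α).sum_comp, Fintype.sum_prod_type, sum_filter]
  refine sum_congr rfl fun a _ => ?_
  by_cases ha : p 0 a <;> simp [Fin.consEquiv, Fin.forall_fin_succ, ha, sum_filter]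

/-- Closed form for the iterated pseudo-product:
`C x y = ∑_{z : x ∨ y ∨ z = 1^s} A x z * B z y`. -/
theorem pseudoMul_eq_sum {R : Type*} [CommRing R] (s : ℕ)
    (A B : (Fin s → Bool) → (Fin s → Bool) → R) (x y : Fin s → Bool) :
    pseudoMul s A B x y =
      ∑ z ∈ Finset.univ.filter (fun z : Fin s → Bool => ∀ i, (x i || y i || z i) = true),
        A x z * B z y := by
  induction s with
  | zero =>
    rw [filter_true_of_mem fun z _ i => i.elim0, Fintype.sum_unique,
      Unique.eq_default x, Unique.eq_default y]
    rfl
  | succ s ih =>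
    rw [Fin.sum_filter_forall_succ fun i c => (x i || y i || c) = true,
      ← Fin.cons_self_tail x, ← Fin.cons_self_tail y]
    generalize x 0 = a, Fin.tail x = u, y 0 = b, Fin.tail y = v
    cases a <;> cases b <;> simp [pseudoMul, ih, filter_eq', add_comm]
end

section
/- Janson's inequality: let (Ω, P) be a probability space, ι a finite index set, and (X_i)_{i ∈ ι} an independent family of Boolean ({0,1}-valued) random variables. Let 𝒮 be a finite family of subsets of ι, and for S ∈ 𝒮 let E_S be the event that X_i = 1 for all i ∈ S. Let μ = Σ_{S ∈ 𝒮} P(E_S) and Δ = Σ_{(S,T) : S, T ∈ 𝒮, S ≠ T, S ∩ T ≠ ∅} P(E_S ∩ E_T) (sum over ordered pairs). Then the probability that none of the events E_S occurs satisfies P(⋂_{S ∈ 𝒮} E_S^c) ≤ exp(−μ + Δ/2). -/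
/-!
Boppana–Spencer: add the sets of `𝒮` one at a time. Writing `F` for the event that no `E_T`,
`T ∈ 𝒮`, occurs, adding `S` replaces `P(F)` by `P(F) - P(E_S ∩ F)`, so it suffices that
`P(E_S ∩ F) ≥ P(F) (P(E_S) - ∑_{T ∼ S} P(E_S ∩ E_T))`; then `1 - x ≤ exp (-x)` and induction
give the bound, each unordered dependent pair being counted once, i.e. `Δ / 2`.
For the key inequality let `F₀ ⊇ F` avoid only the `E_T` with `T` disjoint from `S`. It depends
on coordinates outside `S`, so `P(E_S ∩ F₀) = P(E_S) P(F₀)`; `E_S ∩ F₀` is covered by `E_S ∩ F`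
and the events `E_S ∩ E_T ∩ F₀` with `T ∼ S`, and by Harris' inequality (an up-set and a
down-set of the cube are negatively correlated under a product measure, a case of FKG)
`P(E_S ∩ E_T ∩ F₀) ≤ P(E_S ∩ E_T) P(F₀)`.
-/

open MeasureTheory ProbabilityTheory Finset

lemma apply_inf_mul_apply_sup {α M : Type*} [LinearOrder α] [CommMagma M] (q : α → M)
    (x y : α) : q (x ⊓ y) * q (x ⊔ y) = q x * q y := by
  rcases le_total x y with h | h <;> simp [h, mul_comm]

lemma prod_apply_inf_mul_prod_apply_sup {ι α M : Type*} [LinearOrder α] [CommMonoid M]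
    (s : Finset ι) (q : ι → α → M) (a b : ι → α) :
    (∏ i ∈ s, q i ((a ⊓ b) i)) * ∏ i ∈ s, q i ((a ⊔ b) i) =
      (∏ i ∈ s, q i (a i)) * ∏ i ∈ s, q i (b i) := by
  simp only [← prod_mul_distrib, Pi.inf_apply, Pi.sup_apply, apply_inf_mul_apply_sup]

lemma IsUpperSet.monotone_indicator_one {α M : Type*} [Preorder α] [Zero M] [One M] [Preorder M]
    [ZeroLEOneClass M] {s : Set α} (hs : IsUpperSet s) : Monotone (s.indicator (1 : α → M)) := by
  intro a b hab
  by_cases ha : a ∈ s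
  · simp [ha, hs hab ha]
  · rw [Set.indicator_of_notMem ha]
    exact Set.indicator_nonneg (fun _ _ => zero_le_one) b

lemma sum_product_insert_of_symm {α M : Type*} [DecidableEq α] [AddCommMonoid M] {s : Finset α}
    {a : α} (ha : a ∉ s) {f : α → α → M} (hf : ∀ x y, f x y = f y x) :
    ∑ p ∈ insert a s ×ˢ insert a s, f p.1 p.2 =
      f a a + ∑ p ∈ s ×ˢ s, f p.1 p.2 + 2 • ∑ y ∈ s, f a y := by
  simp only [sum_product, sum_insert ha, sum_add_distrib, hf _ a, two_nsmul]
  abel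

lemma inter_iInter_compl_filter_not_subset {α Ω : Type*} (A : Set Ω) (B : α → Set Ω)
    (p : α → Prop) [DecidablePred p] (s : Finset α) :
    A ∩ ⋂ x ∈ s.filter (¬p ·), (B x)ᶜ ⊆
      (A ∩ ⋂ x ∈ s, (B x)ᶜ) ∪ ⋃ x ∈ s.filter p, A ∩ B x ∩ ⋂ y ∈ s.filter (¬p ·), (B y)ᶜ := by
  rintro ω ⟨hωA, hω₀⟩
  by_cases hω : ω ∈ ⋂ x ∈ s, (B x)ᶜ
  · exact Or.inl ⟨hωA, hω⟩
  simp only [Set.mem_iInter₂, Set.mem_compl_iff, not_forall, not_not] at hω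
  obtain ⟨x, hx, hωx⟩ := hω
  have hpx : p x := by_contra fun h => Set.mem_iInter₂.1 hω₀ x (mem_filter.2 ⟨hx, h⟩) hωx
  exact Or.inr <| Set.mem_iUnion₂.2 ⟨x, mem_filter.2 ⟨hx, hpx⟩, ⟨hωA, hωx⟩, hω₀⟩

lemma preimage_eq_preimage_restrict {ι Ω β : Type*} {X : ι → Ω → β} {T : Finset ι}
    {A : Set (ι → β)} (hA : DependsOn (· ∈ A) (T : Set ι)) :
    (fun ω i => X i ω) ⁻¹' A = (fun ω (i : T) => X i ω) ⁻¹' ((fun f (i : T) => f i) '' A) := by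
  ext ω
  refine ⟨fun hω => ⟨_, hω, rfl⟩, ?_⟩
  rintro ⟨f, hf, hfω⟩
  exact cast (hA fun i hi => congrFun hfω ⟨i, hi⟩) hf

section BooleanVector

variable {ι Ω : Type*} [Fintype ι] [MeasurableSpace Ω] {P : Measure Ω} {X : ι → Ω → Bool}

lemma measurableSet_pi_lambda_preimage (hmeas : ∀ i, Measurable (X i)) (C : Set (ι → Bool)) :
    MeasurableSet ((fun ω i => X i ω) ⁻¹' C) :=
  measurable_pi_lambda _ hmeas .of_discrete

lemma measureReal_preimage_eq_sum_mul_indicator [DecidableEq ι] [IsFiniteMeasure P]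
    (hmeas : ∀ i, Measurable (X i)) (C : Set (ι → Bool)) :
    P.real ((fun ω i => X i ω) ⁻¹' C) =
      ∑ f, P.real ((fun ω i => X i ω) ⁻¹' {f}) * C.indicator 1 f := by
  classical
  simp only [Set.indicator_apply, Pi.one_apply, mul_ite, mul_one, mul_zero]
  rw [← sum_filter, sum_measureReal_preimage_singleton _
    fun _ _ => measurableSet_pi_lambda_preimage hmeas _, coe_filter_univ, Set.ofPred_mem_eq]

lemma measureReal_preimage_singleton_eq_prod (hindep : iIndepFun X P) (f : ι → Bool) :
    P.real ((fun ω i => X i ω) ⁻¹' {f}) = ∏ i, P.real (X i ⁻¹' {f i}) := by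
  have hf : (fun ω i => X i ω) ⁻¹' {f} = ⋂ i ∈ (univ : Finset ι), X i ⁻¹' {f i} := by
    ext ω
    simp [funext_iff]
  rw [measureReal_def, hf, hindep.measure_inter_preimage_eq_mul _ fun _ _ => .of_discrete,
    ENNReal.toReal_prod]
  rfl

theorem harris_inequality [DecidableEq ι] (hmeas : ∀ i, Measurable (X i))
    (hindep : iIndepFun X P) {A D : Set (ι → Bool)} (hA : IsUpperSet A) (hD : IsLowerSet D) :
    P.real ((fun ω i => X i ω) ⁻¹' (A ∩ D)) ≤
      P.real ((fun ω i => X i ω) ⁻¹' A) * P.real ((fun ω i => X i ω) ⁻¹' D) := by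
  have := hindep.isProbabilityMeasure
  have hfkg := fkg (A.indicator 1) (Dᶜ.indicator 1) (fun f => P.real ((fun ω i => X i ω) ⁻¹' {f}))
    (fun _ => measureReal_nonneg) (Set.indicator_nonneg fun _ _ => zero_le_one)
    (Set.indicator_nonneg fun _ _ => zero_le_one)
    hA.monotone_indicator_one hD.compl.monotone_indicator_one fun a b => by
      simp only [measureReal_preimage_singleton_eq_prod hindep]
      exact (prod_apply_inf_mul_prod_apply_sup _ (fun i b => P.real (X i ⁻¹' {b})) a b).ge
  have hAD (f : ι → Bool) :
      A.indicator (1 : (ι → Bool) → ℝ) f * Dᶜ.indicator 1 f = (A \ D).indicator 1 f := by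
    rw [Set.sdiff_eq, Set.inter_indicator_one]
    rfl
  have hone : ∑ f, P.real ((fun ω i => X i ω) ⁻¹' {f}) = 1 := by
    simpa using (measureReal_preimage_eq_sum_mul_indicator (P := P) hmeas Set.univ).symm
  simp only [hAD, hone, one_mul, ← measureReal_preimage_eq_sum_mul_indicator hmeas] at hfkg
  have hmD := measurableSet_pi_lambda_preimage hmeas D
  rw [Set.preimage_compl, measureReal_compl hmD, probReal_univ, Set.preimage_sdiff] at hfkg
  have := measureReal_inter_add_sdiff (μ := P) (s := (fun ω i => X i ω) ⁻¹' A) hmD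
  rw [Set.preimage_inter]
  linarith

lemma measureReal_preimage_inter_eq_mul_of_dependsOn [DecidableEq ι]
    (hmeas : ∀ i, Measurable (X i)) (hindep : iIndepFun X P) {S : Finset ι}
    {A B : Set (ι → Bool)} (hA : DependsOn (· ∈ A) (S : Set ι))
    (hB : DependsOn (· ∈ B) (S : Set ι)ᶜ) :
    P.real ((fun ω i => X i ω) ⁻¹' (A ∩ B)) =
      P.real ((fun ω i => X i ω) ⁻¹' A) * P.real ((fun ω i => X i ω) ⁻¹' B) := by
  rw [← coe_compl] at hB
  rw [measureReal_def, measureReal_def, measureReal_def, Set.preimage_inter,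
    preimage_eq_preimage_restrict hA, preimage_eq_preimage_restrict hB,
    (hindep.indepFun_finset S Sᶜ disjoint_compl_right hmeas).measure_inter_preimage_eq_mul _ _
      .of_discrete .of_discrete, ENNReal.toReal_mul]

end BooleanVector

section Janson

variable {ι Ω : Type*} {X : ι → Ω → Bool}

def principalSet (S : Finset ι) : Set (ι → Bool) := {f | ∀ i ∈ S, f i = true}

def principalEvent (X : ι → Ω → Bool) (S : Finset ι) : Set Ω := {ω | ∀ i ∈ S, X i ω = true}

lemma isUpperSet_principalSet (S : Finset ι) : IsUpperSet (principalSet S) :=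
  fun _ _ hfg hf i hi => hfg i (hf i hi)

lemma isLowerSet_iInter_compl_principalSet (𝒮 : Finset (Finset ι)) :
    IsLowerSet (⋂ T ∈ 𝒮, (principalSet T)ᶜ) :=
  isLowerSet_iInter₂ fun T _ => (isUpperSet_principalSet T).compl

lemma dependsOn_mem_principalSet (S : Finset ι) : DependsOn (· ∈ principalSet S) (S : Set ι) :=
  fun _ _ hfg => propext <| forall₂_congr fun i hi => by rw [hfg i hi]

lemma dependsOn_mem_iInter_compl_principalSet {𝒮 : Finset (Finset ι)} {S : Finset ι}
    (h𝒮 : ∀ T ∈ 𝒮, Disjoint S T) :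
    DependsOn (· ∈ ⋂ T ∈ 𝒮, (principalSet T)ᶜ) (S : Set ι)ᶜ := by
  intro f g hfg
  simp only [Set.mem_iInter₂, Set.mem_compl_iff]
  refine propext <| forall₂_congr fun T hT => not_congr <| Iff.of_eq <|
    dependsOn_mem_principalSet T fun i hi => hfg i ?_
  exact fun hiS => disjoint_left.1 (h𝒮 T hT) hiS hi

lemma iInter_compl_principalEvent_eq_preimage (𝒮 : Finset (Finset ι)) :
    ⋂ T ∈ 𝒮, (principalEvent X T)ᶜ = (fun ω i => X i ω) ⁻¹' ⋂ T ∈ 𝒮, (principalSet T)ᶜ := by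
  simp only [Set.preimage_iInter₂, Set.preimage_compl]
  rfl

variable [DecidableEq ι] [MeasurableSpace Ω] {P : Measure Ω}

def jansonDelta (P : Measure Ω) (X : ι → Ω → Bool) (𝒮 : Finset (Finset ι)) : ℝ :=
  ∑ p ∈ (𝒮 ×ˢ 𝒮).filter (fun p : Finset ι × Finset ι => p.1 ≠ p.2 ∧ (p.1 ∩ p.2).Nonempty),
    P.real (principalEvent X p.1 ∩ principalEvent X p.2)

lemma jansonDelta_insert {S : Finset ι} {𝒮 : Finset (Finset ι)} (hS : S ∉ 𝒮) :
    jansonDelta P X (insert S 𝒮) = jansonDelta P X 𝒮 +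
      2 * ∑ T ∈ 𝒮 with (S ∩ T).Nonempty, P.real (principalEvent X S ∩ principalEvent X T) := by
  simp only [jansonDelta, sum_filter]
  rw [sum_product_insert_of_symm hS (f := fun T U => if T ≠ U ∧ (T ∩ U).Nonempty then
    P.real (principalEvent X T ∩ principalEvent X U) else 0)
    fun T U => by simp only [ne_comm, inter_comm, Set.inter_comm]]
  have hrow : ∑ T ∈ 𝒮, (if S ≠ T ∧ (S ∩ T).Nonempty then
        P.real (principalEvent X S ∩ principalEvent X T) else 0) =
      ∑ T ∈ 𝒮, if (S ∩ T).Nonempty then P.real (principalEvent X S ∩ principalEvent X T) else 0 :=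
    sum_congr rfl fun T hT => by simp [(ne_of_mem_of_not_mem hT hS).symm]
  simp [hrow, nsmul_eq_mul]

variable [Fintype ι]

lemma measureReal_principalEvent_inter_iInter_compl_eq_mul (hmeas : ∀ i, Measurable (X i))
    (hindep : iIndepFun X P) {S : Finset ι} {𝒯 : Finset (Finset ι)}
    (h𝒯 : ∀ T ∈ 𝒯, Disjoint S T) :
    P.real (principalEvent X S ∩ ⋂ T ∈ 𝒯, (principalEvent X T)ᶜ) =
      P.real (principalEvent X S) * P.real (⋂ T ∈ 𝒯, (principalEvent X T)ᶜ) := by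
  rw [iInter_compl_principalEvent_eq_preimage]
  exact measureReal_preimage_inter_eq_mul_of_dependsOn hmeas hindep
    (dependsOn_mem_principalSet S) (dependsOn_mem_iInter_compl_principalSet h𝒯)

lemma measureReal_principalEvent_inter_iInter_compl_le_mul (hmeas : ∀ i, Measurable (X i))
    (hindep : iIndepFun X P) (S T : Finset ι) (𝒯 : Finset (Finset ι)) :
    P.real (principalEvent X S ∩ principalEvent X T ∩ ⋂ U ∈ 𝒯, (principalEvent X U)ᶜ) ≤
      P.real (principalEvent X S ∩ principalEvent X T) *
        P.real (⋂ U ∈ 𝒯, (principalEvent X U)ᶜ) := by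
  rw [iInter_compl_principalEvent_eq_preimage]
  exact harris_inequality hmeas hindep
    ((isUpperSet_principalSet S).inter (isUpperSet_principalSet T))
    (isLowerSet_iInter_compl_principalSet _)

lemma mul_sub_le_measureReal_principalEvent_inter (hmeas : ∀ i, Measurable (X i))
    (hindep : iIndepFun X P) (S : Finset ι) (𝒮 : Finset (Finset ι)) :
    P.real (⋂ T ∈ 𝒮, (principalEvent X T)ᶜ) * (P.real (principalEvent X S) -
        ∑ T ∈ 𝒮 with (S ∩ T).Nonempty, P.real (principalEvent X S ∩ principalEvent X T)) ≤
      P.real (principalEvent X S ∩ ⋂ T ∈ 𝒮, (principalEvent X T)ᶜ) := by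
  have := hindep.isProbabilityMeasure
  set E := principalEvent X
  set a := P.real (E S)
  set c := ∑ T ∈ 𝒮 with (S ∩ T).Nonempty, P.real (E S ∩ E T)
  set F := ⋂ T ∈ 𝒮, (E T)ᶜ
  set F₀ := ⋂ T ∈ 𝒮.filter fun T => ¬(S ∩ T).Nonempty, (E T)ᶜ
  have hindep₀ : P.real (E S ∩ F₀) = a * P.real F₀ :=
    measureReal_principalEvent_inter_iInter_compl_eq_mul hmeas hindep fun T hT =>
      disjoint_iff_inter_eq_empty.2 (not_nonempty_iff_eq_empty.1 (mem_filter.1 hT).2)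
  have hunion : a * P.real F₀ ≤ P.real (E S ∩ F) + c * P.real F₀ :=
    calc a * P.real F₀ = P.real (E S ∩ F₀) := hindep₀.symm
      _ ≤ P.real (E S ∩ F) + ∑ T ∈ 𝒮 with (S ∩ T).Nonempty, P.real (E S ∩ E T ∩ F₀) :=
        (measureReal_mono (inter_iInter_compl_filter_not_subset _ _ _ _)).trans <|
          (measureReal_union_le _ _).trans <|
            add_le_add_right (measureReal_biUnion_finset_le _ _) _
      _ ≤ P.real (E S ∩ F) + c * P.real F₀ := by
        rw [sum_mul]
        gcongr with T
        exact measureReal_principalEvent_inter_iInter_compl_le_mul hmeas hindep S T _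
  have hFF₀ : P.real F ≤ P.real F₀ :=
    measureReal_mono (Set.biInter_subset_biInter_left (coe_subset.2 (filter_subset _ _)))
  rcases le_or_gt (a - c) 0 with hac | hac
  · exact (mul_nonpos_of_nonneg_of_nonpos measureReal_nonneg hac).trans measureReal_nonneg
  · calc P.real F * (a - c) ≤ P.real F₀ * (a - c) := by gcongr
      _ ≤ P.real (E S ∩ F) := by linarith

lemma measureReal_iInter_compl_principalEvent_insert_le (hmeas : ∀ i, Measurable (X i))
    (hindep : iIndepFun X P) (S : Finset ι) (𝒮 : Finset (Finset ι)) :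
    P.real (⋂ T ∈ insert S 𝒮, (principalEvent X T)ᶜ) ≤
      P.real (⋂ T ∈ 𝒮, (principalEvent X T)ᶜ) * Real.exp (-P.real (principalEvent X S) +
        ∑ T ∈ 𝒮 with (S ∩ T).Nonempty, P.real (principalEvent X S ∩ principalEvent X T)) := by
  have := hindep.isProbabilityMeasure
  have hmS : MeasurableSet (principalEvent X S) :=
    measurableSet_pi_lambda_preimage hmeas (principalSet S)
  have hsplit := measureReal_inter_add_sdiff (μ := P) (s := ⋂ T ∈ 𝒮, (principalEvent X T)ᶜ) hmS
  have hcore := mul_sub_le_measureReal_principalEvent_inter hmeas hindep S 𝒮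
  rw [set_biInter_insert, Set.inter_comm, ← Set.sdiff_eq]
  rw [Set.inter_comm] at hsplit
  set F := ⋂ T ∈ 𝒮, (principalEvent X T)ᶜ
  set c := ∑ T ∈ 𝒮 with (S ∩ T).Nonempty, P.real (principalEvent X S ∩ principalEvent X T)
  calc P.real (F \ principalEvent X S) ≤ P.real F * (-P.real (principalEvent X S) + c + 1) := by
        linarith
    _ ≤ _ := by gcongr; exact Real.add_one_le_exp _

end Janson

theorem janson_inequality_general {Ω : Type*} [MeasurableSpace Ω] (P : Measure Ω)
    {ι : Type*} [Fintype ι] [DecidableEq ι]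
    (X : ι → Ω → Bool) (hmeas : ∀ i, Measurable (X i))
    (hindep : iIndepFun X P)
    (𝒮 : Finset (Finset ι)) :
    let E : Finset ι → Set Ω := fun S => {ω | ∀ i ∈ S, X i ω = true}
    let μ : ℝ := ∑ S ∈ 𝒮, (P (E S)).toReal
    let Δ : ℝ := ∑ p ∈ (𝒮 ×ˢ 𝒮).filter
        (fun p : Finset ι × Finset ι => p.1 ≠ p.2 ∧ (p.1 ∩ p.2).Nonempty),
      (P (E p.1 ∩ E p.2)).toReal
    (P (⋂ S ∈ 𝒮, (E S)ᶜ)).toReal ≤ Real.exp (-μ + Δ / 2) := by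
  have := hindep.isProbabilityMeasure
  change P.real (⋂ S ∈ 𝒮, (principalEvent X S)ᶜ) ≤
    Real.exp (-∑ S ∈ 𝒮, P.real (principalEvent X S) + jansonDelta P X 𝒮 / 2)
  induction 𝒮 using Finset.induction_on with
  | empty => simp [jansonDelta]
  | insert S 𝒮 hS ih =>
    rw [sum_insert hS, jansonDelta_insert hS]
    calc _ ≤ _ := measureReal_iInter_compl_principalEvent_insert_le hmeas hindep S 𝒮
      _ ≤ Real.exp (-∑ T ∈ 𝒮, P.real (principalEvent X T) + jansonDelta P X 𝒮 / 2) *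
          Real.exp (-P.real (principalEvent X S) + ∑ T ∈ 𝒮 with (S ∩ T).Nonempty,
            P.real (principalEvent X S ∩ principalEvent X T)) := by gcongr
      _ = _ := by rw [← Real.exp_add]; ring_nf

/-- Janson's inequality.  Given an independent family of Boolean random variables
`(X i)_{i ∈ ι}` and a finite family `𝒮` of index sets, with principal events
`E_S = {ω | ∀ i ∈ S, X i ω = 1}`, setting `μ = ∑_{S ∈ 𝒮} P(E_S)` and
`Δ = ∑_{S ≠ T, S ∩ T ≠ ∅} P(E_S ∩ E_T)` (over ordered pairs), the probability that
none of the events occurs is at most `exp(-μ + Δ/2)`. -/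
theorem janson_inequality {Ω : Type*} [MeasurableSpace Ω] (P : Measure Ω)
    [IsProbabilityMeasure P] {ι : Type*} [Fintype ι] [DecidableEq ι]
    (X : ι → Ω → Bool) (hmeas : ∀ i, Measurable (X i))
    (hindep : iIndepFun X P)
    (𝒮 : Finset (Finset ι)) :
    let E : Finset ι → Set Ω := fun S => {ω | ∀ i ∈ S, X i ω = true}
    let μ : ℝ := ∑ S ∈ 𝒮, (P (E S)).toReal
    let Δ : ℝ := ∑ p ∈ (𝒮 ×ˢ 𝒮).filter
        (fun p : Finset ι × Finset ι => p.1 ≠ p.2 ∧ (p.1 ∩ p.2).Nonempty),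
      (P (E p.1 ∩ E p.2)).toReal
    (P (⋂ S ∈ 𝒮, (E S)ᶜ)).toReal ≤ Real.exp (-μ + Δ / 2) :=
  janson_inequality_general P X hmeas hindep 𝒮
end

section
/- There exists a constant C > 0 such that for every integer s ≥ 1, Σ_{ℓ=0}^{⌊4s/7⌋} C(s, ℓ) · 16^ℓ · 9^{s−ℓ} ≤ C · α1^s / √s, where α1 = 14 · 54^{1/7} and C(s, ℓ) denotes the binomial coefficient. -/
/-!
The terms `C(s, ℓ) 16^ℓ 9^(s-ℓ)` grow by a factor at least `4/3` up to `ℓ = m := ⌊4s/7⌋`,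
so the sum is at most four times its last term. Writing `k = s - m`, that term is
`(C(s, m) 4^m 3^k) · 4^m 3^k`. The first factor is `7^s` times a binomial probability at its mode,
which Stirling's bounds `√(2πn) (n/e)^n ≤ n! ≤ e √n (n/e)^n` and Gibbs' inequality
`a^m b^k ≤ m^m k^k` (for `a + b = m + k`) make `O(7^s / √s)`. The second factor is at most
`(4^(4/7) 3^(3/7))^s`, and `7 · 4^(4/7) 3^(3/7) = 14 · 54^(1/7)`.
-/

open Real Nat Finset Stirling

theorem factorial_le_exp_one_mul_sqrt_mul_pow {n : ℕ} (hn : n ≠ 0) :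
    (n ! : ℝ) ≤ exp 1 * √n * (n / exp 1) ^ n := by
  obtain ⟨k, rfl⟩ := Nat.exists_eq_succ_of_ne_zero hn
  have hle : stirlingSeq (k + 1) ≤ exp 1 / √2 :=
    stirlingSeq_one ▸ stirlingSeq'_antitone (Nat.zero_le k)
  rw [stirlingSeq, div_le_iff₀ (by positivity)] at hle
  calc ((k + 1) ! : ℝ)
      ≤ exp 1 / √2 * (√(2 * (k + 1 : ℕ)) * ((k + 1 : ℕ) / exp 1) ^ (k + 1)) := hle
    _ = exp 1 * √(k + 1 : ℕ) * ((k + 1 : ℕ) / exp 1) ^ (k + 1) := by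
      rw [sqrt_mul zero_le_two]
      field_simp

theorem choose_add_mul_sqrt_mul_pow_mul_pow_le (m k : ℕ) (hs : m + k ≠ 0) :
    ((m + k).choose m : ℝ) * (2 * π * √(m * k) * (m ^ m * k ^ k)) ≤
      exp 1 * √(m + k) * (m + k) ^ (m + k) := by
  have hfact : ((m + k).choose m : ℝ) * m ! * k ! = (m + k) ! := by
    rw [Nat.choose_symm_add]; exact_mod_cast Nat.add_choose_mul_factorial_mul_factorial m k
  have hupper := factorial_le_exp_one_mul_sqrt_mul_pow hs
  push_cast at hupper
  have he : exp 1 ≠ 0 := (exp_pos 1).ne'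
  calc ((m + k).choose m : ℝ) * (2 * π * √(m * k) * (m ^ m * k ^ k))
      = exp 1 ^ (m + k) * (((m + k).choose m : ℝ) * (√(2 * π * m) * (m / exp 1) ^ m)
          * (√(2 * π * k) * (k / exp 1) ^ k)) := by
        rw [sqrt_mul' _ (Nat.cast_nonneg k), sqrt_mul' _ (Nat.cast_nonneg m),
          sqrt_mul (by positivity) k, div_pow, div_pow, pow_add]
        field_simp
        rw [sq_sqrt (by positivity)]
        ring
    _ ≤ exp 1 ^ (m + k) * (((m + k).choose m : ℝ) * m ! * k !) := by
        gcongr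
        · exact le_factorial_stirling m
        · exact le_factorial_stirling k
    _ ≤ exp 1 ^ (m + k) * (exp 1 * √(m + k) * ((m + k) / exp 1) ^ (m + k)) := by
        rw [hfact]
        gcongr
    _ = exp 1 * √(m + k) * (m + k) ^ (m + k) := by
        rw [div_pow]
        field_simp

theorem pow_le_pow_mul_exp_sub (n : ℕ) {a : ℝ} (ha : 0 ≤ a) :
    a ^ n ≤ n ^ n * exp (a - n) := by
  rcases eq_or_ne n 0 with rfl | hn
  · simpa using ha
  have hn' : (0 : ℝ) < n := by positivity
  calc a ^ n = n ^ n * (a / n) ^ n := by rw [div_pow]; field_simp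
    _ ≤ n ^ n * exp (a / n - 1) ^ n := by
      gcongr
      linarith [add_one_le_exp (a / n - 1)]
    _ = n ^ n * exp (a - n) := by
      rw [← exp_nat_mul]
      field_simp

theorem pow_mul_pow_le_of_add_eq (m k : ℕ) {a b : ℝ} (ha : 0 ≤ a) (hb : 0 ≤ b)
    (hab : a + b = m + k) : a ^ m * b ^ k ≤ m ^ m * k ^ k := by
  calc a ^ m * b ^ k ≤ (m ^ m * exp (a - m)) * (k ^ k * exp (b - k)) := by
        gcongr
        exacts [pow_le_pow_mul_exp_sub m ha, pow_le_pow_mul_exp_sub k hb]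
    _ = m ^ m * k ^ k := by
        rw [mul_mul_mul_comm, ← exp_add, show a - m + (b - k) = 0 by linarith, exp_zero, mul_one]

theorem choose_add_mul_pow_mul_pow_mul_sqrt_le (m k : ℕ) (hs : m + k ≠ 0) {p q : ℝ}
    (hp : 0 ≤ p) (hq : 0 ≤ q) (hpq : p + q = 1) :
    ((m + k).choose m : ℝ) * p ^ m * q ^ k * (2 * π * √(m * k)) ≤ exp 1 * √(m + k) := by
  have hpos : (0 : ℝ) < m + k := by exact_mod_cast Nat.pos_of_ne_zero hs
  have hentropy := pow_mul_pow_le_of_add_eq m k (mul_nonneg hp hpos.le) (mul_nonneg hq hpos.le)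
    (by rw [← add_mul, hpq, one_mul])
  refine le_of_mul_le_mul_right ?_ (pow_pos hpos (m + k))
  calc ((m + k).choose m : ℝ) * p ^ m * q ^ k * (2 * π * √(m * k)) * (m + k) ^ (m + k)
      = ((m + k).choose m : ℝ) *
          (2 * π * √(m * k) * ((p * (m + k)) ^ m * (q * (m + k)) ^ k)) := by
        rw [mul_pow, mul_pow, pow_add]
        ring
    _ ≤ ((m + k).choose m : ℝ) * (2 * π * √(m * k) * (m ^ m * k ^ k)) := by gcongr
    _ ≤ exp 1 * √(m + k) * (m + k) ^ (m + k) := choose_add_mul_sqrt_mul_pow_mul_pow_le m k hs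

theorem choose_add_mul_four_pow_mul_three_pow_mul_sqrt_le {m k : ℕ} (hs : m + k ≠ 0)
    (hm : m + k ≤ 4 * m) (hk : m + k ≤ 4 * k) :
    ((m + k).choose m : ℝ) * 4 ^ m * 3 ^ k * √(m + k) ≤ 2 * 7 ^ (m + k) := by
  set X : ℝ := ((m + k).choose m : ℝ) * (4 / 7) ^ m * (3 / 7) ^ k
  have hX : X * (2 * π * √(m * k)) ≤ exp 1 * √(m + k) :=
    choose_add_mul_pow_mul_pow_mul_sqrt_le m k hs (by norm_num) (by norm_num) (by norm_num)
  have hmk : ((m : ℝ) + k) / 4 ≤ √(m * k) := by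
    apply le_sqrt_of_sq_le
    have hm' : ((m : ℝ) + k) ≤ 4 * m := by exact_mod_cast hm
    have hk' : ((m : ℝ) + k) ≤ 4 * k := by exact_mod_cast hk
    nlinarith
  have hsq : √((m : ℝ) + k) * √((m : ℝ) + k) = m + k := mul_self_sqrt (by positivity)
  have he : exp 1 ≤ π := by linarith [exp_one_lt_d9, pi_gt_three]
  have hXs : X * √(m + k) ≤ 2 := by
    have hpos : (0 : ℝ) < π * (m + k) := by
      have : (0 : ℝ) < m + k := by exact_mod_cast Nat.pos_of_ne_zero hs
      positivity
    refine le_of_mul_le_mul_right ?_ hpos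
    calc X * √(m + k) * (π * (m + k)) = X * √(m + k) * (2 * π * ((m + k) / 4)) * 2 := by ring
      _ ≤ X * √(m + k) * (2 * π * √(m * k)) * 2 := by gcongr
      _ = X * (2 * π * √(m * k)) * √(m + k) * 2 := by ring
      _ ≤ exp 1 * √(m + k) * √(m + k) * 2 := by gcongr
      _ ≤ 2 * (π * (m + k)) := by rw [mul_assoc (exp 1), hsq]; nlinarith
  calc ((m + k).choose m : ℝ) * 4 ^ m * 3 ^ k * √(m + k) = 7 ^ (m + k) * (X * √(m + k)) := by
        simp only [X, div_pow, pow_add]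
        field_simp
    _ ≤ 7 ^ (m + k) * 2 := by gcongr
    _ = 2 * 7 ^ (m + k) := mul_comm _ _

theorem pow_mul_pow_le_pow_mul_pow_of_le {a b : ℝ} (hb : 0 ≤ b) (hba : b ≤ a)
    {i j i' j' : ℕ} (hi : i ≤ i') (h : i + j = i' + j') :
    a ^ i * b ^ j ≤ a ^ i' * b ^ j' := by
  obtain ⟨d, rfl⟩ := Nat.exists_eq_add_of_le hi
  obtain rfl : j = j' + d := by omega
  have ha : 0 ≤ a := hb.trans hba
  calc a ^ i * b ^ (j' + d) = a ^ i * b ^ j' * b ^ d := by ring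
    _ ≤ a ^ i * b ^ j' * a ^ d := by gcongr
    _ = a ^ (i + d) * b ^ j' := by ring

theorem fourteen_mul_rpow_seven_pow :
    (14 * (54 : ℝ) ^ ((1 : ℝ) / 7)) ^ 7 = 7 ^ 7 * (4 ^ 4 * 3 ^ 3) := by
  rw [mul_pow, ← rpow_natCast ((54 : ℝ) ^ ((1 : ℝ) / 7)) 7, ← rpow_mul (by norm_num)]
  norm_num

theorem seven_pow_mul_four_pow_mul_three_pow_le {m k : ℕ} (h : 7 * m ≤ 4 * (m + k)) :
    (7 : ℝ) ^ (m + k) * 4 ^ m * 3 ^ k ≤ (14 * (54 : ℝ) ^ ((1 : ℝ) / 7)) ^ (m + k) := by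
  refine le_of_pow_le_pow_left₀ (by norm_num : 7 ≠ 0) (by positivity) ?_
  have hshift : (4 : ℝ) ^ (7 * m) * 3 ^ (7 * k) ≤ 4 ^ (4 * (m + k)) * 3 ^ (3 * (m + k)) :=
    pow_mul_pow_le_pow_mul_pow_of_le (by norm_num) (by norm_num) h (by ring)
  calc ((7 : ℝ) ^ (m + k) * 4 ^ m * 3 ^ k) ^ 7
      = 7 ^ (7 * (m + k)) * (4 ^ (7 * m) * 3 ^ (7 * k)) := by ring
    _ ≤ 7 ^ (7 * (m + k)) * (4 ^ (4 * (m + k)) * 3 ^ (3 * (m + k))) := by gcongr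
    _ = ((14 * (54 : ℝ) ^ ((1 : ℝ) / 7)) ^ (m + k)) ^ 7 := by
      conv_rhs => rw [← pow_mul, mul_comm (m + k) 7, pow_mul, fourteen_mul_rpow_seven_pow]
      rw [mul_pow, mul_pow, ← pow_mul, ← pow_mul, ← pow_mul]

theorem mul_sum_range_succ_le_of_le_mul {t : ℕ → ℝ} {r : ℝ} (hr : 0 ≤ r) (h0 : 0 ≤ t 0)
    {n : ℕ} (h : ∀ ℓ < n, t ℓ ≤ r * t (ℓ + 1)) :
    (1 - r) * ∑ ℓ ∈ range (n + 1), t ℓ ≤ t n := by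
  induction n with
  | zero => simp only [zero_add, sum_range_one]; linarith [mul_nonneg hr h0]
  | succ n ih =>
    rw [sum_range_succ, mul_add]
    linarith [ih fun ℓ hℓ => h ℓ (by omega), h n (by omega)]

theorem choose_mul_sixteen_pow_mul_nine_pow_le {s ℓ : ℕ} (h : 7 * (ℓ + 1) ≤ 4 * s) :
    (s.choose ℓ * 16 ^ ℓ * 9 ^ (s - ℓ) : ℝ) ≤
      3 / 4 * (s.choose (ℓ + 1) * 16 ^ (ℓ + 1) * 9 ^ (s - (ℓ + 1))) := by
  obtain ⟨j, rfl⟩ : ∃ j, s = ℓ + 1 + j := ⟨s - (ℓ + 1), by omega⟩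
  have hratio : 3 * (ℓ + 1 + j).choose ℓ ≤ 4 * (ℓ + 1 + j).choose (ℓ + 1) := by
    refine Nat.le_of_mul_le_mul_right ?_ (Nat.succ_pos ℓ)
    calc 3 * (ℓ + 1 + j).choose ℓ * (ℓ + 1) ≤ 4 * ((ℓ + 1 + j).choose ℓ * (j + 1)) := by
          nlinarith
      _ = 4 * (ℓ + 1 + j).choose (ℓ + 1) * (ℓ + 1) := by
          rw [mul_assoc, Nat.choose_succ_right_eq]
          congr 3
          omega
  have hratio' : (3 : ℝ) * (ℓ + 1 + j).choose ℓ ≤ 4 * (ℓ + 1 + j).choose (ℓ + 1) := by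
    exact_mod_cast hratio
  rw [show ℓ + 1 + j - ℓ = j + 1 by omega, show ℓ + 1 + j - (ℓ + 1) = j by omega]
  calc ((ℓ + 1 + j).choose ℓ * 16 ^ ℓ * 9 ^ (j + 1) : ℝ)
      = 3 * (ℓ + 1 + j).choose ℓ * (3 * 16 ^ ℓ * 9 ^ j) := by ring
    _ ≤ 4 * (ℓ + 1 + j).choose (ℓ + 1) * (3 * 16 ^ ℓ * 9 ^ j) := by gcongr
    _ = 3 / 4 * ((ℓ + 1 + j).choose (ℓ + 1) * 16 ^ (ℓ + 1) * 9 ^ j) := by ring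

/-- There is a constant `C > 0` such that for every `s ≥ 1`,
`∑_{ℓ=0}^{⌊4s/7⌋} C(s,ℓ)·16^ℓ·9^{s−ℓ} ≤ C·α₁^s/√s`, where `α₁ = 14·54^{1/7}`. -/
theorem binomial_sum_16_9_bound :
    ∃ C : ℝ, 0 < C ∧ ∀ s : ℕ, 1 ≤ s →
      (∑ ℓ ∈ Finset.range (4 * s / 7 + 1),
          (Nat.choose s ℓ * 16 ^ ℓ * 9 ^ (s - ℓ) : ℝ)) ≤
        C * (14 * (54 : ℝ) ^ ((1 : ℝ) / 7)) ^ s / Real.sqrt s := by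
  refine ⟨8, by norm_num, fun s hs => ?_⟩
  rw [le_div_iff₀ (by positivity)]
  obtain rfl | hs2 : s = 1 ∨ 2 ≤ s := by omega
  · have : (1 : ℝ) ≤ (54 : ℝ) ^ ((1 : ℝ) / 7) := one_le_rpow (by norm_num) (by norm_num)
    norm_num
    linarith
  obtain ⟨m, hm⟩ : ∃ m, m = 4 * s / 7 := ⟨_, rfl⟩
  obtain ⟨k, rfl⟩ : ∃ k, s = m + k := ⟨s - m, by omega⟩
  rw [← hm]
  have hgeom := mul_sum_range_succ_le_of_le_mul (r := 3 / 4) (n := m)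
    (t := fun ℓ ↦ ((m + k).choose ℓ * 16 ^ ℓ * 9 ^ (m + k - ℓ) : ℝ))
    (by norm_num) (by positivity)
    fun ℓ hℓ ↦ choose_mul_sixteen_pow_mul_nine_pow_le (by omega)
  have hcentral := choose_add_mul_four_pow_mul_three_pow_mul_sqrt_le (m := m) (k := k)
    (by omega) (by omega) (by omega)
  have hexp := seven_pow_mul_four_pow_mul_three_pow_le (m := m) (k := k) (by omega)
  push_cast
  calc (∑ ℓ ∈ range (m + 1), ((m + k).choose ℓ * 16 ^ ℓ * 9 ^ (m + k - ℓ) : ℝ)) *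
        √(m + k)
      ≤ 4 * ((m + k).choose m * 16 ^ m * 9 ^ (m + k - m)) * √(m + k) := by
        gcongr
        linarith
    _ = 4 * ((m + k).choose m * 4 ^ m * 3 ^ k * √(m + k)) * (4 ^ m * 3 ^ k) := by
        rw [Nat.add_sub_cancel_left, show (16 : ℝ) = 4 ^ 2 by norm_num,
          show (9 : ℝ) = 3 ^ 2 by norm_num, ← pow_mul, ← pow_mul]
        ring
    _ ≤ 4 * (2 * 7 ^ (m + k)) * (4 ^ m * 3 ^ k) := by gcongr
    _ = 8 * (7 ^ (m + k) * 4 ^ m * 3 ^ k) := by ring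
    _ ≤ 8 * (14 * (54 : ℝ) ^ ((1 : ℝ) / 7)) ^ (m + k) := by gcongr
end
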